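/- Let A ⊆ 𝕋ⁿ be a tropical convex cone, i.e., a ⊕ b ∈ A (componentwise max) for all a, b ∈ A, and λ ⊙ a ∈ A (adding λ to every coordinate) for all a ∈ A and λ ∈ 𝕋. If the signed pair x = (x⁺,x⁻) belongs to the interior of the signed polar A° (taken in the space of signed pairs of (𝕋ⁿ)²), then ⟨x⁺,a⟩ > ⟨x⁻,a⟩ holds strictly for every a ∈ A with a ≠ (−∞,…,−∞). -/

import Mathlib

/-- The tropical (max-plus) semiring 𝕋 = ℝ ∪ {−∞}, modeled as `WithBot ℝ`. -/
abbrev Trop : Type := WithBot ℝ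

/-- The map 𝕋 → ℝ, x ↦ eˣ (with e^{−∞} = 0), inducing the metric
d(x,y) = |eˣ − e^y| on 𝕋. -/
noncomputable def tropExp : Trop → ℝ := WithBot.recBotCoe (0 : ℝ) Real.exp

/-- The topology on 𝕋 induced by the metric d(x,y) = |eˣ − e^y|. -/
noncomputable instance : TopologicalSpace Trop :=
  TopologicalSpace.induced tropExp inferInstance

/-- A pair of vectors (x⁺, x⁻) ∈ (𝕋ⁿ)² is signed if, for every coordinate i,
x⁺_i = −∞ or x⁻_i = −∞. -/
def SignedVecPair {n : ℕ} (x : (Fin n → Trop) × (Fin n → Trop)) : Prop :=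
  ∀ i, x.1 i = ⊥ ∨ x.2 i = ⊥

/-- Tropical scalar product of vectors: ⟨x,y⟩ = max_i (x_i + y_i). -/
noncomputable def tdot {n : ℕ} (x y : Fin n → Trop) : Trop :=
  Finset.univ.sup fun i => x i + y i

/-- The "signed part" f^∨ of a pair of vectors f = (f⁺, f⁻):
f^{∨+}_i = f⁺_i if f⁺_i ≥ f⁻_i and −∞ otherwise;
f^{∨−}_i = f⁻_i if f⁻_i > f⁺_i and −∞ otherwise. -/
noncomputable def vee {n : ℕ} (f : (Fin n → Trop) × (Fin n → Trop)) :
    (Fin n → Trop) × (Fin n → Trop) :=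
  (fun i => if f.2 i ≤ f.1 i then f.1 i else ⊥,
   fun i => if f.1 i < f.2 i then f.2 i else ⊥)

/-- Tropical scalar action: (λ ⊙ f)_i = λ + f_i. -/
noncomputable def tsmul {n : ℕ} (l : Trop) (f : Fin n → Trop) : Fin n → Trop :=
  fun i => l + f i

/-- A monotone pre-congruence C ⊆ (𝕋ⁿ)²: stable by tropical scalar multiplication,
by componentwise max, by "transitivity" (f⁻ = g⁺ implies (f⁺,g⁻) ∈ C), and containing
every pair (f⁺,f⁻) with f⁺ ≥ f⁻. -/
structure IsMonotonePrecongruence {n : ℕ} (C : Set ((Fin n → Trop) × (Fin n → Trop))) : Prop where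
  smul_mem : ∀ f ∈ C, ∀ l : Trop, (tsmul l f.1, tsmul l f.2) ∈ C
  add_mem : ∀ f ∈ C, ∀ g ∈ C, (f.1 ⊔ g.1, f.2 ⊔ g.2) ∈ C
  trans_mem : ∀ f ∈ C, ∀ g ∈ C, f.2 = g.1 → (f.1, g.2) ∈ C
  monotone_mem : ∀ f : (Fin n → Trop) × (Fin n → Trop), f.2 ≤ f.1 → f ∈ C

/-- The pair x ⊕_i y = (x⁺ ⊕ y⁺_{∖i}, x⁻_{∖i} ⊕ y⁻), where z_{∖i} is z with
coordinate i replaced by −∞. -/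
noncomputable def oplusI {n : ℕ} (i : Fin n)
    (x y : (Fin n → Trop) × (Fin n → Trop)) : (Fin n → Trop) × (Fin n → Trop) :=
  (x.1 ⊔ Function.update y.1 i ⊥, Function.update x.2 i ⊥ ⊔ y.2)

/-- A signed bend cone R ⊆ (𝕋ⁿ)²: all elements are signed pairs, R contains all
pairs (x⁺, −∞), is stable by tropical scalar multiplication, and is stable under
the operations x, y ↦ (x ⊕ y)^∨ and x, y ↦ (x ⊕_i y)^∨ (the latter when x⁻_i = y⁺_i). -/
structure IsSignedBendCone {n : ℕ} (R : Set ((Fin n → Trop) × (Fin n → Trop))) : Prop where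
  signed : ∀ x ∈ R, SignedVecPair x
  pos_mem : ∀ xp : Fin n → Trop, (xp, fun _ => (⊥ : Trop)) ∈ R
  smul_mem : ∀ x ∈ R, ∀ l : Trop, (tsmul l x.1, tsmul l x.2) ∈ R
  add_vee_mem : ∀ x ∈ R, ∀ y ∈ R, vee (x.1 ⊔ y.1, x.2 ⊔ y.2) ∈ R
  addI_vee_mem : ∀ x ∈ R, ∀ y ∈ R, ∀ i : Fin n, x.2 i = y.1 i → vee (oplusI i x y) ∈ R

/-- The one-sided polar B^⊲ = {a ∈ 𝕋ⁿ : ⟨x⁺,a⟩ ≥ ⟨x⁻,a⟩ for all (x⁺,x⁻) ∈ B}. -/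
def onePolar {n : ℕ} (B : Set ((Fin n → Trop) × (Fin n → Trop))) : Set (Fin n → Trop) :=
  {a | ∀ x ∈ B, tdot x.2 a ≤ tdot x.1 a}

/-- The signed part C^∨ of a set C ⊆ (𝕋ⁿ)²: the signed pairs belonging to C. -/
def signedPart {n : ℕ} (C : Set ((Fin n → Trop) × (Fin n → Trop))) :
    Set ((Fin n → Trop) × (Fin n → Trop)) :=
  {x ∈ C | SignedVecPair x}

/-- The signed polar A° of A ⊆ 𝕋ⁿ : the set of signed pairs (x⁺,x⁻) with
⟨x⁺,a⟩ ≥ ⟨x⁻,a⟩ for all a ∈ A. -/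
def signedPolar {n : ℕ} (A : Set (Fin n → Trop)) :
    Set ((Fin n → Trop) × (Fin n → Trop)) :=
  {x | SignedVecPair x ∧ ∀ a ∈ A, tdot x.2 a ≤ tdot x.1 a}

/-- The signed polar of A ⊆ 𝕋ⁿ, viewed as a subset of the space of signed pairs
of (𝕋ⁿ)² (identified with (𝕊^∨)ⁿ with its subspace topology). -/
def signedPolarSub {n : ℕ} (A : Set (Fin n → Trop)) :
    Set {x : (Fin n → Trop) × (Fin n → Trop) // SignedVecPair x} :=
  {x | ∀ a ∈ A, tdot x.val.2 a ≤ tdot x.val.1 a}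

/-!
Strictness is forced by perturbing `x⁻` upwards within the signed pairs. If
`⟨x⁺,a⟩ = ⟨x⁻,a⟩` is finite, shifting `x⁻` by `ε > 0` raises `⟨x⁻,a⟩` by `ε`. If both are `−∞`,
pick `i` with `aᵢ` finite: then `x⁺ᵢ = x⁻ᵢ = −∞`, and replacing `x⁻ᵢ` by a very negative real
number keeps the pair signed while making `⟨x⁻,a⟩` finite. Either perturbation can be made
arbitrarily small, yet it leaves the polar, contradicting interiority.
-/

open Filter Topology

lemma isInducing_tropExp : IsInducing tropExp := ⟨rfl⟩

lemma continuous_coe_add (b : Trop) : Continuous fun r : ℝ => (r : Trop) + b := by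
  refine isInducing_tropExp.continuous_iff.mpr ?_
  induction b using WithBot.recBotCoe with
  | bot => simpa [Function.comp_def, tropExp] using continuous_const
  | coe s =>
    simpa [Function.comp_def, tropExp, ← WithBot.coe_add] using
      Real.continuous_exp.comp (continuous_add_const s)

lemma tendsto_coe_atBot_nhds_bot : Tendsto (fun r : ℝ => (r : Trop)) atBot (𝓝 ⊥) := by
  rw [isInducing_tropExp.tendsto_nhds_iff]
  simpa [Function.comp_def, tropExp] using Real.tendsto_exp_atBot

section SignedPairs

variable {n : ℕ}

lemma le_tdot (x a : Fin n → Trop) (i : Fin n) : x i + a i ≤ tdot x a :=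
  Finset.le_sup (f := fun i => x i + a i) (Finset.mem_univ i)

lemma tdot_tsmul (l : Trop) (x a : Fin n → Trop) : tdot (tsmul l x) a = l + tdot x a := by
  rw [tdot, tdot, Finset.apply_sup_eq_sup_comp_of_linearOrder (l + ·)
    (fun _ _ h => by dsimp only; gcongr) (WithBot.add_bot l)]
  simp only [tsmul, Function.comp_def, add_assoc]

lemma SignedVecPair.tsmul_snd {x : (Fin n → Trop) × (Fin n → Trop)} (hx : SignedVecPair x)
    (l : Trop) : SignedVecPair (x.1, tsmul l x.2) := fun i =>
  (hx i).imp_right fun h => by simp [tsmul, h]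

lemma SignedVecPair.update_snd {x : (Fin n → Trop) × (Fin n → Trop)} (hx : SignedVecPair x)
    {i : Fin n} (hi : x.1 i = ⊥) (c : Trop) : SignedVecPair (x.1, Function.update x.2 i c) := by
  intro j
  rcases eq_or_ne j i with rfl | hj
  · exact Or.inl hi
  · simpa [hj] using hx j

end SignedPairs

section InteriorSignedPolar

variable {n : ℕ} {A : Set (Fin n → Trop)} {a : Fin n → Trop}
  {x : {x : (Fin n → Trop) × (Fin n → Trop) // SignedVecPair x}}

lemma tdot_fst_ne_bot_of_mem_interior (hx : x ∈ interior (signedPolarSub A)) (ha : a ∈ A)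
    {i : Fin n} (hai : a i ≠ ⊥) : tdot x.val.1 a ≠ ⊥ := by
  intro hbot
  have hpolar : tdot x.val.2 a ≤ tdot x.val.1 a := interior_subset (s := signedPolarSub A) hx a ha
  have hfst : x.val.1 i = ⊥ :=
    (WithBot.add_eq_bot.mp (le_bot_iff.mp (hbot ▸ le_tdot _ a i))).resolve_right hai
  have hsnd : x.val.2 i = ⊥ :=
    (WithBot.add_eq_bot.mp (le_bot_iff.mp (hbot ▸ (le_tdot _ a i).trans hpolar))).resolve_right hai
  let φ : ℝ → {x : (Fin n → Trop) × (Fin n → Trop) // SignedVecPair x} := fun r =>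
    ⟨(x.val.1, Function.update x.val.2 i r), x.prop.update_snd hfst r⟩
  have hφ : Tendsto φ atBot (𝓝 x) := by
    refine tendsto_subtype_rng.mpr (tendsto_const_nhds.prodMk_nhds ?_)
    have hc : Continuous fun c : Trop => Function.update x.val.2 i c :=
      continuous_const.update i continuous_id
    have := (hc.tendsto ⊥).comp tendsto_coe_atBot_nhds_bot
    rwa [Function.update_eq_self_iff.mpr hsnd.symm] at this
  obtain ⟨r, hr⟩ := (hφ.eventually (mem_interior_iff_mem_nhds.mp hx)).exists
  have := (le_tdot _ a i).trans (hr a ha)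
  simp only [φ, Function.update_self, hbot, le_bot_iff, WithBot.add_eq_bot] at this
  exact this.elim WithBot.coe_ne_bot hai

lemma tdot_snd_ne_tdot_fst_of_mem_interior (hx : x ∈ interior (signedPolarSub A)) (ha : a ∈ A)
    (hfin : tdot x.val.1 a ≠ ⊥) : tdot x.val.2 a ≠ tdot x.val.1 a := by
  intro heq
  let ψ : ℝ → {x : (Fin n → Trop) × (Fin n → Trop) // SignedVecPair x} := fun ε =>
    ⟨(x.val.1, tsmul ε x.val.2), x.prop.tsmul_snd ε⟩
  have hψ : Tendsto ψ (𝓝[>] 0) (𝓝 x) := by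
    refine tendsto_nhdsWithin_of_tendsto_nhds (tendsto_subtype_rng.mpr ?_)
    have hc : Continuous fun ε : ℝ => tsmul (ε : Trop) x.val.2 :=
      continuous_pi fun j => continuous_coe_add (x.val.2 j)
    have h0 : tsmul ((0 : ℝ) : Trop) x.val.2 = x.val.2 := by funext; simp [tsmul]
    have := tendsto_const_nhds (x := x.val.1) |>.prodMk_nhds (hc.tendsto 0)
    rwa [h0] at this
  obtain ⟨ε, hε, hεpos⟩ :=
    ((hψ.eventually (mem_interior_iff_mem_nhds.mp hx)).and self_mem_nhdsWithin).exists
  have hle : (ε : Trop) + tdot x.val.1 a ≤ tdot x.val.1 a := by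
    simpa [ψ, tdot_tsmul, heq] using hε a ha
  obtain ⟨t, ht⟩ := WithBot.ne_bot_iff_exists.mp hfin
  rw [← ht, ← WithBot.coe_add, WithBot.coe_le_coe] at hle
  linarith

end InteriorSignedPolar

theorem interior_signedPolar_strict_general {n : ℕ} (A : Set (Fin n → Trop))
    (x : {x : (Fin n → Trop) × (Fin n → Trop) // SignedVecPair x})
    (hx : x ∈ interior (signedPolarSub A)) :
    ∀ a ∈ A, a ≠ (fun _ => (⊥ : Trop)) → tdot x.val.2 a < tdot x.val.1 a := by
  intro a ha ha0
  obtain ⟨i, hai⟩ := Function.ne_iff.mp ha0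
  exact (interior_subset (s := signedPolarSub A) hx a ha).lt_of_ne
    (tdot_snd_ne_tdot_fst_of_mem_interior hx ha (tdot_fst_ne_bot_of_mem_interior hx ha hai))

/-- If A is a tropical convex cone and the signed pair x lies in the interior of the
signed polar A°, then ⟨x⁺,a⟩ > ⟨x⁻,a⟩ strictly for all nonzero a ∈ A. -/
theorem interior_signedPolar_strict {n : ℕ} (A : Set (Fin n → Trop))
    (hadd : ∀ a ∈ A, ∀ b ∈ A, a ⊔ b ∈ A)
    (hsmul : ∀ a ∈ A, ∀ l : Trop, (fun i => l + a i) ∈ A)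
    (x : {x : (Fin n → Trop) × (Fin n → Trop) // SignedVecPair x})
    (hx : x ∈ interior (signedPolarSub A)) :
    ∀ a ∈ A, a ≠ (fun _ => (⊥ : Trop)) → tdot x.val.2 a < tdot x.val.1 a :=
  interior_signedPolar_strict_general A x hx
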